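/- arXiv:1904.09623 — 4 statements merged into one kernel-verified Lean document; each statement's English description precedes it below -/
import Mathlib

section
/- Let α ∈ ℝ^{N×N} be a bi-stochastic matrix with mixing constant λ(α). Then for every probability vector w ∈ ℝ^N (i.e. w has nonnegative entries summing to 1), ‖αw‖² ≤ (1 − λ(α)²)/N + λ(α)² ‖w‖², where ‖·‖ is the Euclidean norm. -/
open scoped BigOperators

/-- The Euclidean norm of a vector in `ℝ^N`. -/
noncomputable def eucNorm {N : ℕ} (v : Fin N → ℝ) : ℝ := Real.sqrt (∑ i, v i ^ 2)

/-- A matrix is bi-stochastic if it has nonnegative entries and every row sum and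
every column sum equals `1`. -/
def BiStochastic {N : ℕ} (α : Matrix (Fin N) (Fin N) ℝ) : Prop :=
  (∀ i j, 0 ≤ α i j) ∧ (∀ i, ∑ j, α i j = 1) ∧ (∀ j, ∑ i, α i j = 1)

/-- The mixing constant `λ(α) = sup { ‖αv‖ : ‖v‖ = 1, ⟨v, 1⟩ = 0 }`. -/
noncomputable def mixConst {N : ℕ} (α : Matrix (Fin N) (Fin N) ℝ) : ℝ :=
  sSup {r : ℝ | ∃ v : Fin N → ℝ, eucNorm v = 1 ∧ (∑ i, v i) = 0 ∧ r = eucNorm (α.mulVec v)}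

/-! Split a vector with coordinate sum `1` as `w = v + N⁻¹ • 1` with `∑ v = 0`. Row sums give
`α 1 = 1` and column sums keep `α v` orthogonal to `1`, so Pythagoras writes both `‖α w‖²` and
`‖w‖²` as the squared norm of the mean-zero part plus `1 / N`; the mean-zero parts compare
through `‖α v‖ ≤ λ(α) ‖v‖`, which is the definition of `λ(α)` after normalising `v`. -/

open Matrix

lemma biStochastic_iff_mem_doublyStochastic {N : ℕ} {α : Matrix (Fin N) (Fin N) ℝ} :
    BiStochastic α ↔ α ∈ doublyStochastic ℝ (Fin N) :=
  mem_doublyStochastic_iff_sum.symm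

lemma eucNorm_eq_norm_toLp {N : ℕ} (v : Fin N → ℝ) : eucNorm v = ‖WithLp.toLp 2 v‖ := by
  simp [eucNorm, EuclideanSpace.norm_eq]

lemma eucNorm_sq {N : ℕ} (v : Fin N → ℝ) : eucNorm v ^ 2 = ∑ i, v i ^ 2 :=
  Real.sq_sqrt (Finset.sum_nonneg fun _ _ => sq_nonneg _)

lemma eucNorm_nonneg {N : ℕ} (v : Fin N → ℝ) : 0 ≤ eucNorm v := Real.sqrt_nonneg _

lemma eucNorm_eq_zero {N : ℕ} {v : Fin N → ℝ} : eucNorm v = 0 ↔ v = 0 := by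
  simp [eucNorm_eq_norm_toLp]

lemma eucNorm_smul {N : ℕ} (c : ℝ) (v : Fin N → ℝ) : eucNorm (c • v) = |c| * eucNorm v := by
  simp [eucNorm_eq_norm_toLp, WithLp.toLp_smul, norm_smul]

lemma eucNorm_mulVec_le_norm_toEuclideanCLM {N : ℕ} (α : Matrix (Fin N) (Fin N) ℝ)
    (v : Fin N → ℝ) :
    eucNorm (α *ᵥ v) ≤ ‖toEuclideanCLM (𝕜 := ℝ) α‖ * eucNorm v := by
  simpa only [eucNorm_eq_norm_toLp, toEuclideanCLM_toLp] using
    (toEuclideanCLM (𝕜 := ℝ) α).le_opNorm (WithLp.toLp 2 v)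

lemma bddAbove_mixConst_set {N : ℕ} (α : Matrix (Fin N) (Fin N) ℝ) :
    BddAbove {r : ℝ | ∃ v : Fin N → ℝ, eucNorm v = 1 ∧ (∑ i, v i) = 0 ∧
      r = eucNorm (α.mulVec v)} := by
  refine ⟨‖toEuclideanCLM (𝕜 := ℝ) α‖, ?_⟩
  rintro _ ⟨v, hv, -, rfl⟩
  simpa [hv] using eucNorm_mulVec_le_norm_toEuclideanCLM α v

lemma eucNorm_mulVec_le_mixConst_mul {N : ℕ} (α : Matrix (Fin N) (Fin N) ℝ)
    {v : Fin N → ℝ} (hv : ∑ i, v i = 0) : eucNorm (α *ᵥ v) ≤ mixConst α * eucNorm v := by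
  obtain rfl | hv0 := eq_or_ne v 0
  · simp [eucNorm]
  have hpos : 0 < eucNorm v := (eucNorm_nonneg v).lt_of_ne' (eucNorm_eq_zero.not.mpr hv0)
  set u := (eucNorm v)⁻¹ • v
  have hu : eucNorm u = 1 := by
    rw [eucNorm_smul, abs_of_pos (inv_pos.mpr hpos), inv_mul_cancel₀ hpos.ne']
  have hu_sum : ∑ i, u i = 0 := by simp [u, ← Finset.mul_sum, hv]
  have hαu : eucNorm (α *ᵥ u) ≤ mixConst α :=
    le_csSup (bddAbove_mixConst_set α) ⟨u, hu, hu_sum, rfl⟩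
  rwa [mulVec_smul, eucNorm_smul, abs_of_pos (inv_pos.mpr hpos), inv_mul_le_iff₀ hpos,
    mul_comm] at hαu

lemma eucNorm_add_smul_one_sq {N : ℕ} {x : Fin N → ℝ} (hx : ∑ i, x i = 0) (c : ℝ) :
    eucNorm (x + c • 1) ^ 2 = eucNorm x ^ 2 + N * c ^ 2 := by
  simp only [eucNorm_sq, Pi.add_apply, Pi.smul_apply, Pi.one_apply, smul_eq_mul, mul_one,
    add_sq, Finset.sum_add_distrib, ← Finset.sum_mul, ← Finset.mul_sum, hx]
  simp

theorem stmt0_general {N : ℕ} (α : Matrix (Fin N) (Fin N) ℝ) (hα : BiStochastic α)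
    (w : Fin N → ℝ) (hw1 : ∑ i, w i = 1) :
    eucNorm (α.mulVec w) ^ 2 ≤ (1 - mixConst α ^ 2) / N + mixConst α ^ 2 * eucNorm w ^ 2 := by
  rw [biStochastic_iff_mem_doublyStochastic] at hα
  have hN : (N : ℝ) ≠ 0 := by
    rintro h
    obtain rfl : N = 0 := by exact_mod_cast h
    simp at hw1
  set v := w - (N : ℝ)⁻¹ • 1
  have hv : ∑ i, v i = 0 := by simp [v, hw1, hN]
  have hw : w = v + (N : ℝ)⁻¹ • 1 := by simp [v]
  have hαw : α *ᵥ w = α *ᵥ v + (N : ℝ)⁻¹ • 1 := by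
    rw [hw, mulVec_add, mulVec_smul, mulVec_one_of_mem_doublyStochastic hα]
  have hαv : eucNorm (α *ᵥ v) ^ 2 ≤ mixConst α ^ 2 * eucNorm v ^ 2 := by
    rw [← mul_pow]
    exact pow_le_pow_left₀ (eucNorm_nonneg _) (eucNorm_mulVec_le_mixConst_mul α hv) 2
  rw [hαw, hw, eucNorm_add_smul_one_sq (by rwa [sum_mulVec_of_mem_doublyStochastic hα]),
    eucNorm_add_smul_one_sq hv]
  have hN_inv : (N : ℝ) * (N : ℝ)⁻¹ ^ 2 = (N : ℝ)⁻¹ := by field_simp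
  rw [hN_inv]
  linear_combination hαv

theorem stmt0 {N : ℕ} (α : Matrix (Fin N) (Fin N) ℝ) (hα : BiStochastic α)
    (w : Fin N → ℝ) (hw0 : ∀ i, 0 ≤ w i) (hw1 : ∑ i, w i = 1) :
    eucNorm (α.mulVec w) ^ 2 ≤ (1 - mixConst α ^ 2) / N + mixConst α ^ 2 * eucNorm w ^ 2 :=
  stmt0_general α hα w hw1
end

section
/- In the α-SMC algorithm, suppose that for each t the connectivity matrix α_{t−1} is F_{t−1}-measurable and almost surely satisfies Σ_{i=1}^N α_{t−1}^{ij} = 1 for every j (columns sum to one). Then for every t ≥ 1 and every bounded measurable φ : X → ℝ, almost surely E[ γ̂_t^N(φ) | F_{t−1} ] = γ̂_{t−1}^N(Q_t φ), where Q_t φ = g_{t−1} · K_t φ. -/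
open MeasureTheory ProbabilityTheory
open scoped BigOperators

/-!
Testing the product formula for the conditional law of the particles against `φ` in coordinate
`i` and against `1` elsewhere gives `E[φ(ξ_{t+1}^i) | F_t]` as the normalised mixture
`(W_{t+1}^i)⁻¹ ∑_j α^{ij} W_t^j g_t(ξ_t^j) K_{t+1}φ(ξ_t^j)`. Multiplying by the `F_t`-measurable
weight `W_{t+1}^i` removes the normaliser, and after summing over `i` the column sums
`∑_i α^{ij} = 1` leave `∑_j W_t^j Q_{t+1}φ(ξ_t^j)`. The weights are positive, `F_t`-measurable
and bounded by `κ^t`, which makes every quantity involved integrable.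
-/

section StochasticSums

variable {ι : Type*} [Fintype ι]

lemma sum_mul_pos_of_sum_eq_one {a v : ι → ℝ} (ha : ∀ j, 0 ≤ a j) (hsum : ∑ j, a j = 1)
    (hv : ∀ j, 0 < v j) : 0 < ∑ j, a j * v j := by
  obtain ⟨j, hj⟩ : ∃ j, a j ≠ 0 := by
    by_contra! h
    simp [h] at hsum
  exact Finset.sum_pos' (fun j _ => mul_nonneg (ha j) (hv j).le)
    ⟨j, Finset.mem_univ j, mul_pos ((ha j).lt_of_ne' hj) (hv j)⟩

lemma sum_mul_le_of_sum_eq_one {a v : ι → ℝ} {C : ℝ} (ha : ∀ j, 0 ≤ a j)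
    (hsum : ∑ j, a j = 1) (hv : ∀ j, v j ≤ C) : ∑ j, a j * v j ≤ C :=
  calc ∑ j, a j * v j ≤ ∑ j, a j * C :=
        Finset.sum_le_sum fun j _ => mul_le_mul_of_nonneg_left (hv j) (ha j)
    _ = C := by rw [← Finset.sum_mul, hsum, one_mul]

lemma sum_sum_mul_of_sum_col_eq_one {a : ι → ι → ℝ} (hcol : ∀ j, ∑ i, a i j = 1) (v : ι → ℝ) :
    ∑ i, ∑ j, a i j * v j = ∑ j, v j := by
  rw [Finset.sum_comm]
  simp only [← Finset.sum_mul, hcol, one_mul]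

end StochasticSums

section Weights

variable {Ω : Type*} {N : ℕ} {A : ℕ → Ω → Matrix (Fin N) (Fin N) ℝ} {W G : ℕ → Fin N → Ω → ℝ}

lemma weight_pos (hAnn : ∀ t ω i j, 0 ≤ A t ω i j) (hArow : ∀ t ω i, ∑ j, A t ω i j = 1)
    (hG : ∀ t j ω, 0 < G t j ω) (hW0 : ∀ i ω, W 0 i ω = 1)
    (hWrec : ∀ t i ω, W (t + 1) i ω = ∑ j, A t ω i j * W t j ω * G t j ω) :
    ∀ t i ω, 0 < W t i ω := by
  intro t
  induction t with
  | zero => simp [hW0]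
  | succ t ih =>
    intro i ω
    simp_rw [hWrec, mul_assoc]
    exact sum_mul_pos_of_sum_eq_one (hAnn t ω i) (hArow t ω i)
      fun j => mul_pos (ih j ω) (hG t j ω)

lemma weight_le_pow (hAnn : ∀ t ω i j, 0 ≤ A t ω i j) (hArow : ∀ t ω i, ∑ j, A t ω i j = 1)
    {κ : ℝ} (hκ : 0 ≤ κ) (hG0 : ∀ t j ω, 0 ≤ G t j ω) (hGle : ∀ t j ω, G t j ω ≤ κ)
    (hW0 : ∀ i ω, W 0 i ω = 1)
    (hWrec : ∀ t i ω, W (t + 1) i ω = ∑ j, A t ω i j * W t j ω * G t j ω) :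
    ∀ t i ω, W t i ω ≤ κ ^ t := by
  intro t
  induction t with
  | zero => simp [hW0]
  | succ t ih =>
    intro i ω
    simp_rw [hWrec, mul_assoc]
    exact sum_mul_le_of_sum_eq_one (hAnn t ω i) (hArow t ω i) fun j =>
      pow_succ κ t ▸ mul_le_mul (ih j ω) (hGle t j ω) (hG0 t j ω) (pow_nonneg hκ t)

lemma measurable_weight_succ {m : MeasurableSpace Ω} {t : ℕ}
    (hA : ∀ i j, Measurable[m] fun ω => A t ω i j) (hW : ∀ j, Measurable[m] (W t j))
    (hG : ∀ j, Measurable[m] (G t j))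
    (hWrec : ∀ i ω, W (t + 1) i ω = ∑ j, A t ω i j * W t j ω * G t j ω) (i : Fin N) :
    Measurable[m] (W (t + 1) i) := by
  rw [show W (t + 1) i = _ from funext (hWrec i)]
  exact Finset.measurable_sum _ fun j _ => ((hA i j).mul (hW j)).mul (hG j)

lemma measurable_weight {F : ℕ → MeasurableSpace Ω} (hFmono : Monotone F)
    (hA : ∀ t i j, Measurable[F t] fun ω => A t ω i j) (hG : ∀ t j, Measurable[F t] (G t j))
    (hW0 : ∀ i ω, W 0 i ω = 1)
    (hWrec : ∀ t i ω, W (t + 1) i ω = ∑ j, A t ω i j * W t j ω * G t j ω) :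
    ∀ t i, Measurable[F t] (W t i) := by
  intro t
  induction t with
  | zero =>
    intro i
    rw [show W 0 i = fun _ => 1 from funext (hW0 i)]
    exact measurable_const
  | succ t ih =>
    exact fun i => (measurable_weight_succ (hA t) ih (hG t) (hWrec t) i).mono
      (hFmono t.le_succ) le_rfl

end Weights

section MixtureSampling

variable {Ω X ι : Type*} [MeasurableSpace X] [Fintype ι] {m m0 : MeasurableSpace Ω}
  {P : Measure Ω}

lemma integrable_comp_of_abs_le [IsFiniteMeasure P] {Y : Ω → X} {ψ : X → ℝ} {b : ℝ}
    (hY : Measurable[m0] Y) (hψ : Measurable ψ) (hψbd : ∀ y, |ψ y| ≤ b) :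
    Integrable (fun ω => ψ (Y ω)) P :=
  .of_bound (hψ.comp hY).aestronglyMeasurable b (ae_of_all _ fun ω => hψbd (Y ω))

lemma integrable_mul_comp_of_abs_le [IsFiniteMeasure P] {Z : Ω → ℝ} {Y : Ω → X} {ψ : X → ℝ}
    {C b : ℝ} (hZ : AEStronglyMeasurable Z P) (hZbd : ∀ ω, |Z ω| ≤ C) (hY : Measurable[m0] Y)
    (hψ : Measurable ψ) (hψbd : ∀ y, |ψ y| ≤ b) :
    Integrable (fun ω => Z ω * ψ (Y ω)) P :=
  (integrable_comp_of_abs_le hY hψ hψbd).bdd_mul hZ (ae_of_all _ hZbd)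

lemma condExp_const_mul_sum_ae_eq {f h : ι → Ω → ℝ} (hf : ∀ i, Integrable (f i) P)
    (hfh : ∀ i, P[f i | m] =ᵐ[P] h i) (c : ℝ) :
    P[fun ω => c * ∑ i, f i ω | m] =ᵐ[P] fun ω => c * ∑ i, h i ω := by
  have hsum : (fun ω => c * ∑ i, f i ω) = c • ∑ i, f i := by
    ext ω
    simp [Finset.sum_apply]
  rw [hsum]
  filter_upwards [condExp_smul (μ := P) c (∑ i, f i) m,
    condExp_finsetSum (s := Finset.univ) (fun i _ => hf i) m, ae_all_iff.mpr hfh] with ω h₁ h₂ h₃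
  simp [h₁, h₂, h₃]

variable {K : Kernel X X} [IsMarkovKernel K] {Y x : ι → Ω → X} {M : ι → ι → Ω → ℝ}
  {Z : ι → Ω → ℝ}

lemma condExp_comp_eq_of_condExp_prod [DecidableEq ι]
    (hcond : ∀ φ : ι → X → ℝ, (∀ i, Measurable (φ i)) → (∀ i x, |φ i x| ≤ 1) →
      P[fun ω => ∏ i, φ i (Y i ω) | m] =ᵐ[P]
        fun ω => ∏ i, ((Z i ω)⁻¹ * ∑ j, M i j ω * ∫ y, φ i y ∂(K (x j ω))))
    (hZ : ∀ i ω, Z i ω = ∑ j, M i j ω) (hZ0 : ∀ i ω, Z i ω ≠ 0)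
    {ψ : X → ℝ} (hψ : Measurable ψ) (hψ1 : ∀ y, |ψ y| ≤ 1) (i : ι) :
    P[fun ω => ψ (Y i ω) | m] =ᵐ[P]
      fun ω => (Z i ω)⁻¹ * ∑ j, M i j ω * ∫ y, ψ y ∂(K (x j ω)) := by
  set φ : ι → X → ℝ := fun k => if k = i then ψ else fun _ => 1
  have hφi : φ i = ψ := if_pos rfl
  have h := hcond φ
    (fun k => by dsimp only [φ]; split_ifs <;> first | exact hψ | exact measurable_const)
    (fun k y => by dsimp only [φ]; split_ifs <;> simp [hψ1])
  have hL : ∀ ω, ∏ k, φ k (Y k ω) = ψ (Y i ω) := fun ω => by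
    rw [Fintype.prod_eq_single i fun k hk => by simp [φ, hk], hφi]
  -- the factors `k ≠ i` test the constant `1` and reduce to `Z⁻¹ Z = 1`
  have hR : ∀ ω, ∏ k, ((Z k ω)⁻¹ * ∑ j, M k j ω * ∫ y, φ k y ∂(K (x j ω))) =
      (Z i ω)⁻¹ * ∑ j, M i j ω * ∫ y, ψ y ∂(K (x j ω)) := fun ω => by
    rw [Fintype.prod_eq_single i fun k hk => by simp [φ, hk, ← hZ, hZ0], hφi]
  simpa only [hL, hR] using h

lemma condExp_mul_comp_eq_of_condExp_prod [IsFiniteMeasure P] [DecidableEq ι] (hm : m ≤ m0)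
    (hcond : ∀ φ : ι → X → ℝ, (∀ i, Measurable (φ i)) → (∀ i x, |φ i x| ≤ 1) →
      P[fun ω => ∏ i, φ i (Y i ω) | m] =ᵐ[P]
        fun ω => ∏ i, ((Z i ω)⁻¹ * ∑ j, M i j ω * ∫ y, φ i y ∂(K (x j ω))))
    (hZ : ∀ i ω, Z i ω = ∑ j, M i j ω) (hZ0 : ∀ i ω, Z i ω ≠ 0)
    (hZmeas : ∀ i, StronglyMeasurable[m] (Z i)) {C : ℝ} (hZbd : ∀ i ω, |Z i ω| ≤ C)
    (hY : ∀ i, Measurable (Y i)) {ψ : X → ℝ} (hψ : Measurable ψ) {b : ℝ}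
    (hψbd : ∀ y, |ψ y| ≤ b) (i : ι) :
    P[fun ω => Z i ω * ψ (Y i ω) | m] =ᵐ[P]
      fun ω => ∑ j, M i j ω * ∫ y, ψ y ∂(K (x j ω)) := by
  set c := max b 1
  have hc : 0 < c := zero_lt_one.trans_le (le_max_right _ _)
  have hψc : ∀ y, |c⁻¹ * ψ y| ≤ 1 := fun y => by
    rw [abs_mul, abs_inv, abs_of_pos hc, inv_mul_le_iff₀ hc, mul_one]
    exact (hψbd y).trans (le_max_left _ _)
  set ψc : Ω → ℝ := fun ω => c⁻¹ * ψ (Y i ω)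
  have hint : Integrable ψc P :=
    integrable_comp_of_abs_le (ψ := fun y => c⁻¹ * ψ y) (hY i) (hψ.const_mul _) hψc
  have hZint : Integrable (Z i * ψc) P :=
    integrable_mul_comp_of_abs_le (ψ := fun y => c⁻¹ * ψ y)
      ((hZmeas i).mono hm).aestronglyMeasurable (hZbd i) (hY i) (hψ.const_mul _) hψc
  have hunit := condExp_comp_eq_of_condExp_prod hcond hZ hZ0 (hψ.const_mul c⁻¹) hψc i
  calc P[fun ω => Z i ω * ψ (Y i ω) | m] = P[c • (Z i * ψc) | m] := by
        congr 1
        ext ω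
        simp only [Pi.smul_apply, Pi.mul_apply, smul_eq_mul, ψc]
        field_simp
    _ =ᵐ[P] c • (Z i * P[ψc | m]) :=
        (condExp_smul c _ m).trans
          ((condExp_mul_of_stronglyMeasurable_left (hZmeas i) hZint hint).const_smul c)
    _ =ᵐ[P] fun ω => ∑ j, M i j ω * ∫ y, ψ y ∂(K (x j ω)) := by
        filter_upwards [hunit] with ω hω
        rw [Pi.smul_apply, Pi.mul_apply, smul_eq_mul, show P[ψc | m] ω = _ from hω]
        simp only [integral_const_mul, mul_left_comm _ c⁻¹, ← Finset.mul_sum]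
        field_simp [hZ0 i ω]

end MixtureSampling

theorem stmt12_general
    -- the state space and the state-space model
    {X : Type*} [MeasurableSpace X]
    (K : ℕ → Kernel X X) (hK : ∀ t, IsMarkovKernel (K t))
    (g : ℕ → X → ℝ) (hgmeas : ∀ t, Measurable (g t)) (hgpos : ∀ t x, 0 < g t x)
    (κg : ℝ) (hgbd : ∀ t x, g t x ≤ κg)
    -- the underlying probability space
    {Ω : Type*} [m0 : MeasurableSpace Ω] (P : Measure Ω) [IsProbabilityMeasure P]
    -- the α-SMC particle system with `N` particles
    (N : ℕ)
    (F : ℕ → MeasurableSpace Ω) (hFle : ∀ t, F t ≤ m0) (hFmono : Monotone F)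
    (ξ : ℕ → Fin N → Ω → X) (A : ℕ → Ω → Matrix (Fin N) (Fin N) ℝ)
    (W : ℕ → Fin N → Ω → ℝ)
    (hξmeas : ∀ t i, Measurable[F t] (ξ t i))
    -- `α_{t}` is `F_{t}`-measurable, entrywise
    (hAmeas : ∀ t i j, Measurable[F t] (fun ω => A t ω i j))
    -- the connectivity matrices are row-stochastic
    (hAnn : ∀ t ω i j, 0 ≤ A t ω i j)
    (hArow : ∀ t ω i, ∑ j, A t ω i j = 1)
    -- the columns of the connectivity matrices sum to one
    (hAcol : ∀ t ω j, ∑ i, A t ω i j = 1)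
    -- initial weights and weight recursion
    (hW0 : ∀ i ω, W 0 i ω = 1)
    (hWrec : ∀ t i ω, W (t + 1) i ω = ∑ j, A t ω i j * W t j ω * g t (ξ t j ω))
    -- conditionally on `F t`, the particles at time `t+1` are independent with the
    -- prescribed mixture distributions
    (hcond : ∀ t (φ : Fin N → X → ℝ), (∀ i, Measurable (φ i)) → (∀ i x, |φ i x| ≤ 1) →
      P[(fun ω => ∏ i, φ i (ξ (t + 1) i ω)) | F t]
        =ᵐ[P] fun ω => ∏ i, ((W (t + 1) i ω)⁻¹ *
            ∑ j, A t ω i j * W t j ω * g t (ξ t j ω) * ∫ y, φ i y ∂(K (t + 1) (ξ t j ω)))) :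
    -- conclusion: `E[γ̂_{t+1}^N(φ) | F_t] = γ̂_t^N(Q_{t+1} φ)` almost surely
    ∀ t (φ : X → ℝ), Measurable φ → (∃ b : ℝ, ∀ x, |φ x| ≤ b) →
      P[(fun ω => (N : ℝ)⁻¹ * ∑ i, W (t + 1) i ω * φ (ξ (t + 1) i ω)) | F t]
        =ᵐ[P] fun ω => (N : ℝ)⁻¹ * ∑ i, W t i ω *
          (g t (ξ t i ω) * ∫ y, φ y ∂(K (t + 1) (ξ t i ω))) := by
  intro t φ hφ ⟨b, hφb⟩
  have := hK (t + 1)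
  have hgξ : ∀ t j, Measurable[F t] fun ω => g t (ξ t j ω) :=
    fun t j => (hgmeas t).comp (hξmeas t j)
  have hWpos := weight_pos hAnn hArow (fun t j ω => hgpos t (ξ t j ω)) hW0 hWrec
  have hWle := weight_le_pow hAnn hArow (le_max_right κg 0)
    (fun t j ω => (hgpos t (ξ t j ω)).le) (fun t j ω => (hgbd t _).trans (le_max_left _ 0))
    hW0 hWrec
  have hWbd : ∀ i ω, |W (t + 1) i ω| ≤ max κg 0 ^ (t + 1) :=
    fun i ω => (abs_of_pos (hWpos (t + 1) i ω)).trans_le (hWle (t + 1) i ω)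
  have hWmeas : ∀ i, Measurable[F t] (W (t + 1) i) :=
    measurable_weight_succ (G := fun t j ω => g t (ξ t j ω)) (hAmeas t)
      (measurable_weight hFmono hAmeas hgξ hW0 hWrec t) (hgξ t) (hWrec t)
  have hξ : ∀ i, Measurable (ξ (t + 1) i) :=
    fun i => (hξmeas (t + 1) i).mono (hFle (t + 1)) le_rfl
  have hint : ∀ i, Integrable (fun ω => W (t + 1) i ω * φ (ξ (t + 1) i ω)) P := fun i =>
    integrable_mul_comp_of_abs_le ((hWmeas i).mono (hFle t) le_rfl).aestronglyMeasurable
      (hWbd i) (hξ i) hφ hφb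
  have key := condExp_mul_comp_eq_of_condExp_prod (hFle t) (hcond t) (hWrec t)
    (fun i ω => (hWpos (t + 1) i ω).ne') (fun i => (hWmeas i).stronglyMeasurable) hWbd hξ hφ hφb
  filter_upwards [condExp_const_mul_sum_ae_eq hint key _] with ω hω
  rw [hω]
  simp only [mul_assoc]
  rw [sum_sum_mul_of_sum_col_eq_one (hAcol t ω)]

theorem stmt12
    -- the state space and the state-space model
    {X : Type*} [MeasurableSpace X]
    (π₀ : Measure X) [IsProbabilityMeasure π₀]
    (K : ℕ → Kernel X X) (hK : ∀ t, IsMarkovKernel (K t))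
    (g : ℕ → X → ℝ) (hgmeas : ∀ t, Measurable (g t)) (hgpos : ∀ t x, 0 < g t x)
    (κg : ℝ) (hgbd : ∀ t x, g t x ≤ κg)
    -- the underlying probability space
    {Ω : Type*} [m0 : MeasurableSpace Ω] (P : Measure Ω) [IsProbabilityMeasure P]
    -- the α-SMC particle system with `N` particles
    (N : ℕ) (hN : 1 ≤ N)
    (F : ℕ → MeasurableSpace Ω) (hFle : ∀ t, F t ≤ m0) (hFmono : Monotone F)
    (ξ : ℕ → Fin N → Ω → X) (A : ℕ → Ω → Matrix (Fin N) (Fin N) ℝ)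
    (W : ℕ → Fin N → Ω → ℝ)
    (hξmeas : ∀ t i, Measurable[F t] (ξ t i))
    -- `α_{t}` is `F_{t}`-measurable, entrywise
    (hAmeas : ∀ t i j, Measurable[F t] (fun ω => A t ω i j))
    -- the connectivity matrices are row-stochastic
    (hAnn : ∀ t ω i j, 0 ≤ A t ω i j)
    (hArow : ∀ t ω i, ∑ j, A t ω i j = 1)
    -- the columns of the connectivity matrices sum to one
    (hAcol : ∀ t ω j, ∑ i, A t ω i j = 1)
    -- initial weights and weight recursion
    (hW0 : ∀ i ω, W 0 i ω = 1)
    (hWrec : ∀ t i ω, W (t + 1) i ω = ∑ j, A t ω i j * W t j ω * g t (ξ t j ω))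
    -- initialisation: i.i.d. samples from `π₀`
    (hξ0meas : ∀ i, Measurable (ξ 0 i))
    (hξ0indep : iIndepFun (ξ 0) P)
    (hξ0law : ∀ i, Measure.map (ξ 0 i) P = π₀)
    -- conditionally on `F t`, the particles at time `t+1` are independent with the
    -- prescribed mixture distributions
    (hcond : ∀ t (φ : Fin N → X → ℝ), (∀ i, Measurable (φ i)) → (∀ i x, |φ i x| ≤ 1) →
      P[(fun ω => ∏ i, φ i (ξ (t + 1) i ω)) | F t]
        =ᵐ[P] fun ω => ∏ i, ((W (t + 1) i ω)⁻¹ *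
            ∑ j, A t ω i j * W t j ω * g t (ξ t j ω) * ∫ y, φ i y ∂(K (t + 1) (ξ t j ω)))) :
    -- conclusion: `E[γ̂_{t+1}^N(φ) | F_t] = γ̂_t^N(Q_{t+1} φ)` almost surely
    ∀ t (φ : X → ℝ), Measurable φ → (∃ b : ℝ, ∀ x, |φ x| ≤ b) →
      P[(fun ω => (N : ℝ)⁻¹ * ∑ i, W (t + 1) i ω * φ (ξ (t + 1) i ω)) | F t]
        =ᵐ[P] fun ω => (N : ℝ)⁻¹ * ∑ i, W t i ω *
          (g t (ξ t i ω) * ∫ y, φ y ∂(K (t + 1) (ξ t i ω))) :=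
  stmt12_general K hK g hgmeas hgpos κg hgbd (m0 := m0) P N F hFle hFmono ξ A W hξmeas hAmeas hAnn
    hArow hAcol hW0 hWrec hcond
end

section
/- In the α-SMC algorithm, suppose that for each t the connectivity matrix α_{t−1} is F_{t−1}-measurable and almost surely satisfies Σ_{i=1}^N α_{t−1}^{ij} = 1 for every j (columns sum to one). Then for every t ≥ 0 and every bounded measurable φ : X → ℝ, E[ γ̂_t^N(φ) ] = γ_t(φ); in particular E[ Ẑ_t^N ] = Z_t. -/
open MeasureTheory ProbabilityTheory
open scoped BigOperators

/-- Iterated Feynman-Kac operator: `Qiter K g t φ = Q_1 (Q_2 (⋯ (Q_t φ)))`, where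
`Q_t φ = g_{t-1} ⬝ K_t φ`.  The unnormalised measure of the state-space model satisfies
`γ_t(φ) = π₀(Qiter K g t φ)`. -/
noncomputable def Qiter {X : Type*} [MeasurableSpace X]
    (K : ℕ → ProbabilityTheory.Kernel X X) (g : ℕ → X → ℝ) : ℕ → (X → ℝ) → X → ℝ
  | 0, φ => φ
  | (t + 1), φ => Qiter K g t (fun x => g t x * ∫ y, φ y ∂(K (t + 1) x))

/-!
Conditionally on `F_t`, the particle `X_{t+1}^i` has law
`(W_{t+1}^i)⁻¹ ∑_j α_t^{ij} W_t^j g_t(X_t^j) K_{t+1}(X_t^j, ·)`, and `W_{t+1}^i` is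
`F_t`-measurable, so the normalisation cancels:
`E[W_{t+1}^i φ(X_{t+1}^i)] = E[∑_j α_t^{ij} W_t^j (Q_{t+1} φ)(X_t^j)]`, where
`Q_{t+1} φ = g_t ⬝ K_{t+1} φ`.
Summing over `i`, the column sums `∑_i α_t^{ij} = 1` turn the right-hand side into
`E[∑_j W_t^j (Q_{t+1} φ)(X_t^j)]`, so `E[∑_i W_t^i φ(X_t^i)] = N π₀(Q_1 ⋯ Q_t φ)` follows by
induction on `t`, the base case being the law `π₀` of the initial particles. All functions
involved are bounded, since `|W_t^i| ≤ ‖g‖^t` by row-stochasticity.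
-/

open Finset

section Preliminaries

variable {X Ω ι : Type*} [MeasurableSpace X]

lemma abs_integral_le_of_abs_le {μ : Measure X} [IsProbabilityMeasure μ] {φ : X → ℝ} {b : ℝ}
    (hφ : ∀ x, |φ x| ≤ b) : |∫ x, φ x ∂μ| ≤ b := by
  simpa using norm_integral_le_of_norm_le_const (μ := μ)
    (ae_of_all _ fun x => (Real.norm_eq_abs (φ x)).trans_le (hφ x))

lemma integrable_of_abs_le [MeasurableSpace Ω] {P : Measure Ω} [IsFiniteMeasure P] {f : Ω → ℝ}
    (hf : Measurable f) {C : ℝ} (hC : ∀ ω, |f ω| ≤ C) : Integrable f P :=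
  .of_bound hf.aestronglyMeasurable C (ae_of_all _ hC)

lemma abs_sum_mul_le_of_sum_eq_one [Fintype ι] {a v : ι → ℝ} (ha : ∀ j, 0 ≤ a j)
    (ha_sum : ∑ j, a j = 1) {C : ℝ} (hv : ∀ j, |v j| ≤ C) : |∑ j, a j * v j| ≤ C :=
  calc |∑ j, a j * v j| ≤ ∑ j, a j * |v j| :=
        (abs_sum_le_sum_abs _ _).trans_eq (by simp only [abs_mul, abs_of_nonneg (ha _)])
    _ ≤ ∑ j, a j * C := sum_le_sum fun j _ => mul_le_mul_of_nonneg_left (hv j) (ha j)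
    _ = C := by rw [← sum_mul, ha_sum, one_mul]

/-- The paper's `Q_{t+1}` for `g = g_t` and `κ = K_{t+1}`: one layer of `Qiter`. -/
noncomputable def feynmanKacStep (g : X → ℝ) (κ : Kernel X X) (φ : X → ℝ) (x : X) : ℝ :=
  g x * ∫ y, φ y ∂κ x

lemma Qiter_succ (K : ℕ → Kernel X X) (g : ℕ → X → ℝ) (t : ℕ) (φ : X → ℝ) :
    Qiter K g (t + 1) φ = Qiter K g t (feynmanKacStep (g t) (K (t + 1)) φ) :=
  rfl

lemma measurable_feynmanKacStep {g φ : X → ℝ} {κ : Kernel X X} (hg : Measurable g)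
    (hφ : Measurable φ) : Measurable (feynmanKacStep g κ φ) :=
  hg.mul hφ.stronglyMeasurable.integral_kernel.measurable

lemma abs_feynmanKacStep_le {g φ : X → ℝ} {κ : Kernel X X} [IsMarkovKernel κ] {c b : ℝ}
    (hg : ∀ x, |g x| ≤ c) (hφ : ∀ x, |φ x| ≤ b) (x : X) :
    |feynmanKacStep g κ φ x| ≤ c * b := by
  rw [feynmanKacStep, abs_mul]
  exact mul_le_mul (hg x) (abs_integral_le_of_abs_le hφ) (abs_nonneg _)
    ((abs_nonneg _).trans (hg x))

variable {m : MeasurableSpace Ω} [m0 : MeasurableSpace Ω] {P : Measure Ω}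

/-- Take the factor `φ / d` at `i`, for some `d ≥ b`, and the factor `1` everywhere else. -/
lemma condExp_comp_eq_of_condExp_prod_s13 [Fintype ι] {ξ : ι → Ω → X} {L : ι → (X → ℝ) → Ω → ℝ}
    (hL_one : ∀ i ω, L i (fun _ => 1) ω = 1)
    (hL_mul : ∀ i (c : ℝ) φ ω, L i (fun x => c * φ x) ω = c * L i φ ω)
    (hcond : ∀ φ : ι → X → ℝ, (∀ i, Measurable (φ i)) → (∀ i x, |φ i x| ≤ 1) →
      P[fun ω => ∏ i, φ i (ξ i ω) | m] =ᵐ[P] fun ω => ∏ i, L i (φ i) ω)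
    (i : ι) {φ : X → ℝ} (hφ : Measurable φ) {b : ℝ} (hb : ∀ x, |φ x| ≤ b) :
    P[fun ω => φ (ξ i ω) | m] =ᵐ[P] L i φ := by
  classical
  obtain ⟨d, hd, hbd⟩ : ∃ d : ℝ, 0 < d ∧ b ≤ d :=
    ⟨max b 1, zero_lt_one.trans_le (le_max_right b 1), le_max_left b 1⟩
  set Φ : ι → X → ℝ := Function.update (fun _ _ => 1) i fun x => d⁻¹ * φ x
  have hΦ_ne : ∀ j ≠ i, Φ j = fun _ => 1 := fun j hj => Function.update_of_ne hj _ _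
  have hΦ_meas : ∀ j, Measurable (Φ j) := by
    intro j
    rcases eq_or_ne j i with rfl | hj
    · simpa [Φ] using hφ.const_mul d⁻¹
    · simp [hΦ_ne j hj]
  have hΦ_le : ∀ j x, |Φ j x| ≤ 1 := by
    intro j x
    rcases eq_or_ne j i with rfl | hj
    · simp only [Φ, Function.update_self]
      rw [abs_mul, abs_of_pos (inv_pos.2 hd), inv_mul_le_iff₀ hd, mul_one]
      exact (hb x).trans hbd
    · simp [hΦ_ne j hj]
  have hprod : (fun ω => ∏ j, Φ j (ξ j ω)) = d⁻¹ • fun ω => φ (ξ i ω) := by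
    ext ω
    rw [Fintype.prod_eq_single i fun j hj => by simp [hΦ_ne j hj]]
    simp [Φ]
  have hL : (fun ω => ∏ j, L j (Φ j) ω) = d⁻¹ • L i φ := by
    ext ω
    rw [Fintype.prod_eq_single i fun j hj => by simp [hΦ_ne j hj, hL_one]]
    simp [Φ, hL_mul]
  have h := (condExp_smul (μ := P) d⁻¹ (fun ω => φ (ξ i ω)) m).symm.trans
    (hprod ▸ hL ▸ hcond Φ hΦ_meas hΦ_le)
  filter_upwards [h] with ω hω
  simpa [hd.ne'] using hω

lemma integral_mul_eq_of_condExp_eq [IsFiniteMeasure P] (hm : m ≤ m0) {w f ℓ : Ω → ℝ}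
    (hw : StronglyMeasurable[m] w) (hwf : Integrable (w * f) P) (hf : Integrable f P)
    (hℓ : P[f | m] =ᵐ[P] ℓ) : ∫ ω, w ω * f ω ∂P = ∫ ω, w ω * ℓ ω ∂P :=
  calc ∫ ω, w ω * f ω ∂P = ∫ ω, P[w * f | m] ω ∂P := (integral_condExp hm).symm
    _ = ∫ ω, w ω * ℓ ω ∂P :=
        integral_congr_ae ((condExp_mul_of_stronglyMeasurable_left hw hwf hf).trans
          ((Filter.EventuallyEq.refl _ w).mul hℓ))

end Preliminaries

/-- The `α`-SMC particle system: `ξ t i` is the particle `X_t^i`, `A t` the connectivity matrix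
`α_t`, `W t i` the weight `W_t^i`. The conditional law of the particles at time `t + 1` given
`ℱ t` is prescribed through the conditional expectations of products of test functions. -/
structure IsAlphaSMC {X Ω ι : Type*} [MeasurableSpace X] [m0 : MeasurableSpace Ω] [Fintype ι]
    (π₀ : Measure X) (K : ℕ → Kernel X X) (g : ℕ → X → ℝ) (P : Measure Ω)
    (ℱ : Filtration ℕ m0) (ξ : ℕ → ι → Ω → X) (A : ℕ → Ω → Matrix ι ι ℝ)
    (W : ℕ → ι → Ω → ℝ) : Prop where
  particle_adapted : ∀ t i, Measurable[ℱ t] (ξ t i)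
  connectivity_adapted : ∀ t i j, Measurable[ℱ t] fun ω => A t ω i j
  connectivity_nonneg : ∀ t ω i j, 0 ≤ A t ω i j
  sum_connectivity_row : ∀ t ω i, ∑ j, A t ω i j = 1
  weight_zero : ∀ i ω, W 0 i ω = 1
  weight_succ : ∀ t i ω, W (t + 1) i ω = ∑ j, A t ω i j * W t j ω * g t (ξ t j ω)
  map_particle_zero : ∀ i, P.map (ξ 0 i) = π₀
  condExp_prod_particle : ∀ t (φ : ι → X → ℝ), (∀ i, Measurable (φ i)) → (∀ i x, |φ i x| ≤ 1) →
    P[fun ω => ∏ i, φ i (ξ (t + 1) i ω) | ℱ t] =ᵐ[P] fun ω => ∏ i, ((W (t + 1) i ω)⁻¹ *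
      ∑ j, A t ω i j * W t j ω * g t (ξ t j ω) * ∫ y, φ i y ∂(K (t + 1) (ξ t j ω)))

namespace IsAlphaSMC

variable {X Ω ι : Type*} [MeasurableSpace X] [m0 : MeasurableSpace Ω] [Fintype ι]
  {π₀ : Measure X} {K : ℕ → Kernel X X} {g : ℕ → X → ℝ} {P : Measure Ω} {ℱ : Filtration ℕ m0}
  {ξ : ℕ → ι → Ω → X} {A : ℕ → Ω → Matrix ι ι ℝ} {W : ℕ → ι → Ω → ℝ}

lemma measurable_particle (h : IsAlphaSMC π₀ K g P ℱ ξ A W) (t : ℕ) (i : ι) :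
    Measurable (ξ t i) :=
  (h.particle_adapted t i).mono (ℱ.le t) le_rfl

lemma weight_pos (h : IsAlphaSMC π₀ K g P ℱ ξ A W) (hgpos : ∀ t x, 0 < g t x) (t : ℕ) (i : ι)
    (ω : Ω) : 0 < W t i ω := by
  induction t generalizing i with
  | zero => simp [h.weight_zero]
  | succ t ih =>
    obtain ⟨j, hj⟩ : ∃ j, 0 < A t ω i j := by
      by_contra! hA
      have := h.sum_connectivity_row t ω i ▸ sum_nonpos fun j _ => hA j
      linarith
    rw [h.weight_succ]
    exact sum_pos'
      (fun k _ => mul_nonneg (mul_nonneg (h.connectivity_nonneg t ω i k) (ih k).le) (hgpos t _).le)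
      ⟨j, mem_univ j, mul_pos (mul_pos hj (ih j)) (hgpos t _)⟩

lemma abs_weight_le_pow (h : IsAlphaSMC π₀ K g P ℱ ξ A W) {κ : ℝ} (hg : ∀ t x, |g t x| ≤ κ)
    (t : ℕ) (i : ι) (ω : Ω) : |W t i ω| ≤ κ ^ t := by
  induction t generalizing i with
  | zero => simp [h.weight_zero]
  | succ t ih =>
    simp_rw [h.weight_succ, mul_assoc]
    refine abs_sum_mul_le_of_sum_eq_one (h.connectivity_nonneg t ω i)
      (h.sum_connectivity_row t ω i) fun j => ?_
    rw [abs_mul, pow_succ]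
    exact mul_le_mul (ih j) (hg t _) (abs_nonneg _) ((abs_nonneg _).trans (ih j))

lemma measurable_weight_succ_of_measurable (h : IsAlphaSMC π₀ K g P ℱ ξ A W)
    (hgm : ∀ t, Measurable (g t)) {t : ℕ} (hW : ∀ j, Measurable[ℱ t] (W t j)) (i : ι) :
    Measurable[ℱ t] (W (t + 1) i) := by
  simp_rw [funext (h.weight_succ t i)]
  exact Finset.measurable_sum _ fun j _ =>
    ((h.connectivity_adapted t i j).mul (hW j)).mul ((hgm t).comp (h.particle_adapted t j))

lemma measurable_weight (h : IsAlphaSMC π₀ K g P ℱ ξ A W) (hgm : ∀ t, Measurable (g t))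
    (t : ℕ) (i : ι) : Measurable[ℱ t] (W t i) := by
  induction t generalizing i with
  | zero => simp_rw [funext (h.weight_zero i)]; exact measurable_const
  | succ t ih =>
    exact (h.measurable_weight_succ_of_measurable hgm ih i).mono (ℱ.mono t.le_succ) le_rfl

lemma measurable_weight_succ (h : IsAlphaSMC π₀ K g P ℱ ξ A W) (hgm : ∀ t, Measurable (g t))
    (t : ℕ) (i : ι) : Measurable[ℱ t] (W (t + 1) i) :=
  h.measurable_weight_succ_of_measurable hgm (h.measurable_weight hgm t) i

lemma condExp_particle_succ (h : IsAlphaSMC π₀ K g P ℱ ξ A W) [∀ t, IsMarkovKernel (K t)]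
    (hgpos : ∀ t x, 0 < g t x) (t : ℕ) (i : ι) {φ : X → ℝ} (hφ : Measurable φ) {b : ℝ}
    (hb : ∀ x, |φ x| ≤ b) :
    P[fun ω => φ (ξ (t + 1) i ω) | ℱ t] =ᵐ[P] fun ω => (W (t + 1) i ω)⁻¹ *
      ∑ j, A t ω i j * W t j ω * g t (ξ t j ω) * ∫ y, φ y ∂(K (t + 1) (ξ t j ω)) := by
  refine condExp_comp_eq_of_condExp_prod_s13 (L := fun i φ ω => (W (t + 1) i ω)⁻¹ *
      ∑ j, A t ω i j * W t j ω * g t (ξ t j ω) * ∫ y, φ y ∂(K (t + 1) (ξ t j ω)))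
    (fun i ω => ?_) (fun i c φ ω => ?_) (h.condExp_prod_particle t) i hφ hb
  · simp only [integral_const, probReal_univ, smul_eq_mul, mul_one, ← h.weight_succ]
    exact inv_mul_cancel₀ (h.weight_pos hgpos _ i ω).ne'
  · simp only [integral_const_mul, mul_sum]
    exact sum_congr rfl fun j _ => by ring

variable [IsFiniteMeasure P]

lemma integrable_weight_mul (h : IsAlphaSMC π₀ K g P ℱ ξ A W) (hgm : ∀ t, Measurable (g t))
    {κ : ℝ} (hg : ∀ t x, |g t x| ≤ κ) {φ : X → ℝ} (hφ : Measurable φ) {b : ℝ}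
    (hb : ∀ x, |φ x| ≤ b) (t : ℕ) (i : ι) :
    Integrable (fun ω => W t i ω * φ (ξ t i ω)) P := by
  refine integrable_of_abs_le
    (((h.measurable_weight hgm t i).mono (ℱ.le t) le_rfl).mul
      (hφ.comp (h.measurable_particle t i)))
    (C := κ ^ t * b) fun ω => ?_
  rw [abs_mul]
  exact mul_le_mul (h.abs_weight_le_pow hg t i ω) (hb _) (abs_nonneg _)
    ((abs_nonneg _).trans (h.abs_weight_le_pow hg t i ω))

lemma integral_weight_mul_succ (h : IsAlphaSMC π₀ K g P ℱ ξ A W) [∀ t, IsMarkovKernel (K t)]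
    (hgm : ∀ t, Measurable (g t)) (hgpos : ∀ t x, 0 < g t x) {κ : ℝ} (hg : ∀ t x, |g t x| ≤ κ)
    {φ : X → ℝ} (hφ : Measurable φ) {b : ℝ} (hb : ∀ x, |φ x| ≤ b) (t : ℕ) (i : ι) :
    ∫ ω, W (t + 1) i ω * φ (ξ (t + 1) i ω) ∂P =
      ∫ ω, ∑ j, A t ω i j * (W t j ω * feynmanKacStep (g t) (K (t + 1)) φ (ξ t j ω)) ∂P := by
  rw [integral_mul_eq_of_condExp_eq (ℱ.le t) (h.measurable_weight_succ hgm t i).stronglyMeasurable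
    (h.integrable_weight_mul hgm hg hφ hb (t + 1) i)
    (integrable_of_abs_le (hφ.comp (h.measurable_particle (t + 1) i)) fun ω => hb _)
    (h.condExp_particle_succ hgpos t i hφ hb)]
  congr 1 with ω
  rw [← mul_assoc, mul_inv_cancel₀ (h.weight_pos hgpos (t + 1) i ω).ne', one_mul]
  simp only [feynmanKacStep, mul_assoc]

lemma integral_sum_weight_mul_succ (h : IsAlphaSMC π₀ K g P ℱ ξ A W)
    [∀ t, IsMarkovKernel (K t)] (hgm : ∀ t, Measurable (g t)) (hgpos : ∀ t x, 0 < g t x)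
    {κ : ℝ} (hg : ∀ t x, |g t x| ≤ κ) (hAcol : ∀ t ω j, ∑ i, A t ω i j = 1)
    {φ : X → ℝ} (hφ : Measurable φ) {b : ℝ} (hb : ∀ x, |φ x| ≤ b) (t : ℕ) :
    ∫ ω, ∑ i, W (t + 1) i ω * φ (ξ (t + 1) i ω) ∂P =
      ∫ ω, ∑ j, W t j ω * feynmanKacStep (g t) (K (t + 1)) φ (ξ t j ω) ∂P := by
  set ψ := feynmanKacStep (g t) (K (t + 1)) φ
  have hψ : Measurable ψ := measurable_feynmanKacStep (hgm t) hφ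
  have hψb : ∀ x, |ψ x| ≤ κ * b := abs_feynmanKacStep_le (hg t) hb
  have hint : ∀ i, Integrable (fun ω => ∑ j, A t ω i j * (W t j ω * ψ (ξ t j ω))) P := by
    intro i
    refine integrable_of_abs_le (C := κ ^ t * (κ * b)) (Finset.measurable_sum _ fun j _ =>
      ((h.connectivity_adapted t i j).mono (ℱ.le t) le_rfl).mul
        (((h.measurable_weight hgm t j).mono (ℱ.le t) le_rfl).mul
          (hψ.comp (h.measurable_particle t j)))) fun ω => ?_
    refine abs_sum_mul_le_of_sum_eq_one (h.connectivity_nonneg t ω i)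
      (h.sum_connectivity_row t ω i) fun j => ?_
    rw [abs_mul]
    exact mul_le_mul (h.abs_weight_le_pow hg t j ω) (hψb _) (abs_nonneg _)
      ((abs_nonneg _).trans (h.abs_weight_le_pow hg t j ω))
  rw [integral_finsetSum _ fun i _ => h.integrable_weight_mul hgm hg hφ hb (t + 1) i,
    sum_congr rfl fun i _ => h.integral_weight_mul_succ hgm hgpos hg hφ hb t i,
    ← integral_finsetSum _ fun i _ => hint i]
  congr 1 with ω
  rw [sum_comm]
  exact sum_congr rfl fun j _ => by rw [← sum_mul, hAcol, one_mul]

lemma integral_sum_weight_mul_zero (h : IsAlphaSMC π₀ K g P ℱ ξ A W) {φ : X → ℝ}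
    (hφ : Measurable φ) {b : ℝ} (hb : ∀ x, |φ x| ≤ b) :
    ∫ ω, ∑ i, W 0 i ω * φ (ξ 0 i ω) ∂P = Fintype.card ι * ∫ x, φ x ∂π₀ := by
  have hint : ∀ i, Integrable (fun ω => φ (ξ 0 i ω)) P := fun i =>
    integrable_of_abs_le (hφ.comp (h.measurable_particle 0 i)) fun ω => hb _
  have hlaw : ∀ i, ∫ ω, φ (ξ 0 i ω) ∂P = ∫ x, φ x ∂π₀ := fun i => by
    rw [← h.map_particle_zero i,
      integral_map (h.measurable_particle 0 i).aemeasurable hφ.aestronglyMeasurable]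
  simp only [h.weight_zero, one_mul]
  rw [integral_finsetSum _ fun i _ => hint i]
  simp [hlaw]

theorem integral_sum_weight_mul (h : IsAlphaSMC π₀ K g P ℱ ξ A W) [∀ t, IsMarkovKernel (K t)]
    (hgm : ∀ t, Measurable (g t)) (hgpos : ∀ t x, 0 < g t x) {κ : ℝ} (hg : ∀ t x, |g t x| ≤ κ)
    (hAcol : ∀ t ω j, ∑ i, A t ω i j = 1) (t : ℕ) {φ : X → ℝ} (hφ : Measurable φ) {b : ℝ}
    (hb : ∀ x, |φ x| ≤ b) :
    ∫ ω, ∑ i, W t i ω * φ (ξ t i ω) ∂P = Fintype.card ι * ∫ x, Qiter K g t φ x ∂π₀ := by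
  induction t generalizing φ b with
  | zero => exact h.integral_sum_weight_mul_zero hφ hb
  | succ t ih =>
    rw [h.integral_sum_weight_mul_succ hgm hgpos hg hAcol hφ hb, Qiter_succ]
    exact ih (measurable_feynmanKacStep (hgm t) hφ) (abs_feynmanKacStep_le (hg t) hb)

end IsAlphaSMC

theorem stmt13_general
    -- the state space and the state-space model
    {X : Type*} [MeasurableSpace X]
    (π₀ : Measure X)
    (K : ℕ → Kernel X X) (hK : ∀ t, IsMarkovKernel (K t))
    (g : ℕ → X → ℝ) (hgmeas : ∀ t, Measurable (g t)) (hgpos : ∀ t x, 0 < g t x)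
    (κg : ℝ) (hgbd : ∀ t x, g t x ≤ κg)
    -- the underlying probability space
    {Ω : Type*} [m0 : MeasurableSpace Ω] (P : Measure Ω) [IsProbabilityMeasure P]
    -- the α-SMC particle system with `N` particles
    (N : ℕ) (hN : 1 ≤ N)
    (F : ℕ → MeasurableSpace Ω) (hFle : ∀ t, F t ≤ m0) (hFmono : Monotone F)
    (ξ : ℕ → Fin N → Ω → X) (A : ℕ → Ω → Matrix (Fin N) (Fin N) ℝ)
    (W : ℕ → Fin N → Ω → ℝ)
    (hξmeas : ∀ t i, Measurable[F t] (ξ t i))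
    -- `α_{t}` is `F_{t}`-measurable, entrywise
    (hAmeas : ∀ t i j, Measurable[F t] (fun ω => A t ω i j))
    -- the connectivity matrices are row-stochastic
    (hAnn : ∀ t ω i j, 0 ≤ A t ω i j)
    (hArow : ∀ t ω i, ∑ j, A t ω i j = 1)
    -- the columns of the connectivity matrices sum to one
    (hAcol : ∀ t ω j, ∑ i, A t ω i j = 1)
    -- initial weights and weight recursion
    (hW0 : ∀ i ω, W 0 i ω = 1)
    (hWrec : ∀ t i ω, W (t + 1) i ω = ∑ j, A t ω i j * W t j ω * g t (ξ t j ω))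
    -- initialisation: i.i.d. samples from `π₀`
    (hξ0law : ∀ i, Measure.map (ξ 0 i) P = π₀)
    -- conditionally on `F t`, the particles at time `t+1` are independent with the
    -- prescribed mixture distributions
    (hcond : ∀ t (φ : Fin N → X → ℝ), (∀ i, Measurable (φ i)) → (∀ i x, |φ i x| ≤ 1) →
      P[(fun ω => ∏ i, φ i (ξ (t + 1) i ω)) | F t]
        =ᵐ[P] fun ω => ∏ i, ((W (t + 1) i ω)⁻¹ *
            ∑ j, A t ω i j * W t j ω * g t (ξ t j ω) * ∫ y, φ i y ∂(K (t + 1) (ξ t j ω)))) :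
    -- conclusion: `E[γ̂_t^N(φ)] = γ_t(φ)`, and in particular `E[Ẑ_t^N] = Z_t`
    ∀ t (φ : X → ℝ), Measurable φ → (∃ b : ℝ, ∀ x, |φ x| ≤ b) →
      (∫ ω, ((N : ℝ)⁻¹ * ∑ i, W t i ω * φ (ξ t i ω)) ∂P = ∫ x, Qiter K g t φ x ∂π₀) ∧
      (∫ ω, ((N : ℝ)⁻¹ * ∑ i, W t i ω) ∂P = ∫ x, Qiter K g t (fun _ => 1) x ∂π₀) := by
  rintro t φ hφ ⟨b, hb⟩
  let ℱ : Filtration ℕ m0 := ⟨F, hFmono, hFle⟩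
  have h : IsAlphaSMC π₀ K g P ℱ ξ A W :=
    ⟨hξmeas, hAmeas, hAnn, hArow, hW0, hWrec, hξ0law, hcond⟩
  have hg : ∀ t x, |g t x| ≤ κg := fun t x => (abs_of_pos (hgpos t x)).trans_le (hgbd t x)
  have hN₀ : (N : ℝ) ≠ 0 := Nat.cast_ne_zero.2 (Nat.one_le_iff_ne_zero.1 hN)
  have hmean {ψ : X → ℝ} (hψ : Measurable ψ) {c : ℝ} (hc : ∀ x, |ψ x| ≤ c) :
      ∫ ω, ((N : ℝ)⁻¹ * ∑ i, W t i ω * ψ (ξ t i ω)) ∂P = ∫ x, Qiter K g t ψ x ∂π₀ := by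
    rw [integral_const_mul, h.integral_sum_weight_mul hgmeas hgpos hg hAcol t hψ hc,
      Fintype.card_fin, inv_mul_cancel_left₀ hN₀]
  exact ⟨hmean hφ hb, by simpa using hmean (ψ := fun _ => 1) measurable_const (c := 1) (by simp)⟩

theorem stmt13
    -- the state space and the state-space model
    {X : Type*} [MeasurableSpace X]
    (π₀ : Measure X) [IsProbabilityMeasure π₀]
    (K : ℕ → Kernel X X) (hK : ∀ t, IsMarkovKernel (K t))
    (g : ℕ → X → ℝ) (hgmeas : ∀ t, Measurable (g t)) (hgpos : ∀ t x, 0 < g t x)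
    (κg : ℝ) (hgbd : ∀ t x, g t x ≤ κg)
    -- the underlying probability space
    {Ω : Type*} [m0 : MeasurableSpace Ω] (P : Measure Ω) [IsProbabilityMeasure P]
    -- the α-SMC particle system with `N` particles
    (N : ℕ) (hN : 1 ≤ N)
    (F : ℕ → MeasurableSpace Ω) (hFle : ∀ t, F t ≤ m0) (hFmono : Monotone F)
    (ξ : ℕ → Fin N → Ω → X) (A : ℕ → Ω → Matrix (Fin N) (Fin N) ℝ)
    (W : ℕ → Fin N → Ω → ℝ)
    (hξmeas : ∀ t i, Measurable[F t] (ξ t i))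
    -- `α_{t}` is `F_{t}`-measurable, entrywise
    (hAmeas : ∀ t i j, Measurable[F t] (fun ω => A t ω i j))
    -- the connectivity matrices are row-stochastic
    (hAnn : ∀ t ω i j, 0 ≤ A t ω i j)
    (hArow : ∀ t ω i, ∑ j, A t ω i j = 1)
    -- the columns of the connectivity matrices sum to one
    (hAcol : ∀ t ω j, ∑ i, A t ω i j = 1)
    -- initial weights and weight recursion
    (hW0 : ∀ i ω, W 0 i ω = 1)
    (hWrec : ∀ t i ω, W (t + 1) i ω = ∑ j, A t ω i j * W t j ω * g t (ξ t j ω))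
    -- initialisation: i.i.d. samples from `π₀`
    (hξ0meas : ∀ i, Measurable (ξ 0 i))
    (hξ0indep : iIndepFun (ξ 0) P)
    (hξ0law : ∀ i, Measure.map (ξ 0 i) P = π₀)
    -- conditionally on `F t`, the particles at time `t+1` are independent with the
    -- prescribed mixture distributions
    (hcond : ∀ t (φ : Fin N → X → ℝ), (∀ i, Measurable (φ i)) → (∀ i x, |φ i x| ≤ 1) →
      P[(fun ω => ∏ i, φ i (ξ (t + 1) i ω)) | F t]
        =ᵐ[P] fun ω => ∏ i, ((W (t + 1) i ω)⁻¹ *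
            ∑ j, A t ω i j * W t j ω * g t (ξ t j ω) * ∫ y, φ i y ∂(K (t + 1) (ξ t j ω)))) :
    -- conclusion: `E[γ̂_t^N(φ)] = γ_t(φ)`, and in particular `E[Ẑ_t^N] = Z_t`
    ∀ t (φ : X → ℝ), Measurable φ → (∃ b : ℝ, ∀ x, |φ x| ≤ b) →
      (∫ ω, ((N : ℝ)⁻¹ * ∑ i, W t i ω * φ (ξ t i ω)) ∂P = ∫ x, Qiter K g t φ x ∂π₀) ∧
      (∫ ω, ((N : ℝ)⁻¹ * ∑ i, W t i ω) ∂P = ∫ x, Qiter K g t (fun _ => 1) x ∂π₀) :=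
  stmt13_general π₀ K hK g hgmeas hgpos κg hgbd (m0 := m0) P N hN F hFle hFmono ξ A W hξmeas hAmeas
    hAnn hArow hAcol hW0 hWrec hξ0law hcond
end

section
/- Consider the α-SMC algorithm with randomised connectivity with parameter C. Then for every t ≥ 0 and every bounded measurable φ : X → ℝ, E[ γ̂_t^N(φ) ] = γ_t(φ). -/
open MeasureTheory ProbabilityTheory
open scoped BigOperators ENNReal

theorem stmt14
    -- the state space and the state-space model
    {X : Type*} [MeasurableSpace X]
    (π₀ : Measure X) [IsProbabilityMeasure π₀]
    (K : ℕ → Kernel X X) (hK : ∀ t, IsMarkovKernel (K t))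
    (g : ℕ → X → ℝ) (hgmeas : ∀ t, Measurable (g t)) (hgpos : ∀ t x, 0 < g t x)
    (κg : ℝ) (hgbd : ∀ t x, g t x ≤ κg)
    -- the underlying probability space
    {Ω : Type*} [m0 : MeasurableSpace Ω] (P : Measure Ω) [IsProbabilityMeasure P]
    -- the α-SMC particle system with `N` particles and randomised connectivity
    -- with parameter `C`
    (N C : ℕ) (hC : 1 ≤ C) (hCN : C ≤ N)
    (F : ℕ → MeasurableSpace Ω) (hFle : ∀ t, F t ≤ m0) (hFmono : Monotone F)
    (ξ : ℕ → Fin N → Ω → X) (W : ℕ → Fin N → Ω → ℝ)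
    -- `S t i` is the random set of the `C` nonzero entries of row `i` of `α_t`
    (S : ℕ → Fin N → Ω → Finset (Fin N))
    (A : ℕ → Ω → Matrix (Fin N) (Fin N) ℝ)
    (hA : ∀ t ω i j, A t ω i j = if j ∈ S t i ω then (C : ℝ)⁻¹ else 0)
    (hScard : ∀ t i ω, (S t i ω).card = C)
    (hSmeas : ∀ t i, @Measurable Ω (Finset (Fin N)) (F (t + 1)) ⊤ (S t i))
    -- each row subset is uniformly distributed over the `C`-element subsets
    (hSunif : ∀ t i (s : Finset (Fin N)), s.card = C →
      P {ω | S t i ω = s} = (↑(N.choose C))⁻¹)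
    -- the rows of the matrices `(α_t)` are mutually independent (over all times and rows)
    (hSiid : iIndepFun (m := fun _ : ℕ × Fin N => (⊤ : MeasurableSpace (Finset (Fin N))))
      (fun p => S p.1 p.2) P)
    -- `α_t` is independent of `F_t`
    (hSindep : ∀ t, Indep
      (⨆ i, MeasurableSpace.comap (S t i) (⊤ : MeasurableSpace (Finset (Fin N)))) (F t) P)
    (hξmeas : ∀ t i, Measurable[F t] (ξ t i))
    -- initial weights and weight recursion
    (hW0 : ∀ i ω, W 0 i ω = 1)
    (hWrec : ∀ t i ω, W (t + 1) i ω = ∑ j, A t ω i j * W t j ω * g t (ξ t j ω))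
    -- initialisation: i.i.d. samples from `π₀`
    (hξ0meas : ∀ i, Measurable (ξ 0 i))
    (hξ0indep : iIndepFun (m := fun _ => inferInstance) (ξ 0) P)
    (hξ0law : ∀ i, Measure.map (ξ 0 i) P = π₀)
    -- conditionally on `F t` and `α_t`, the particles at time `t+1` are independent with
    -- the prescribed mixture distributions
    (hcond : ∀ t (φ : Fin N → X → ℝ), (∀ i, Measurable (φ i)) → (∀ i x, |φ i x| ≤ 1) →
      P[(fun ω => ∏ i, φ i (ξ (t + 1) i ω)) |
          F t ⊔ (⨆ i, MeasurableSpace.comap (S t i) (⊤ : MeasurableSpace (Finset (Fin N))))]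
        =ᵐ[P] fun ω => ∏ i, ((W (t + 1) i ω)⁻¹ *
            ∑ j, A t ω i j * W t j ω * g t (ξ t j ω) * ∫ y, φ i y ∂(K (t + 1) (ξ t j ω)))) :
    -- conclusion: `E[γ̂_t^N(φ)] = γ_t(φ)`
    ∀ t (φ : X → ℝ), Measurable φ → (∃ b : ℝ, ∀ x, |φ x| ≤ b) →
      ∫ ω, ((N : ℝ)⁻¹ * ∑ i, W t i ω * φ (ξ t i ω)) ∂P = ∫ x, Qiter K g t φ x ∂π₀ := by
  classical
  have hXne : Nonempty X := by
    by_contra h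
    rw [not_nonempty_iff] at h
    have h1 : π₀ Set.univ = 1 := measure_univ
    rw [Set.univ_eq_empty_iff.mpr h, measure_empty] at h1
    exact zero_ne_one h1
  obtain ⟨x₀⟩ := hXne
  have hκg : (0:ℝ) < κg := lt_of_lt_of_le (hgpos 0 x₀) (hgbd 0 x₀)
  have hN1 : 1 ≤ N := le_trans hC hCN
  have hNpos : (0:ℝ) < N := by exact_mod_cast hN1
  have hCpos : (0:ℝ) < C := by exact_mod_cast hC
  -- measurability of the matrix entries
  have hAmeas : ∀ t i j, Measurable[F (t+1)] (fun ω => A t ω i j) := by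
    intro t i j
    have he : (fun ω => A t ω i j)
        = (fun s : Finset (Fin N) => if j ∈ s then (C:ℝ)⁻¹ else 0) ∘ (S t i) :=
      funext fun ω => hA t ω i j
    rw [he]
    exact measurable_from_top.comp (hSmeas t i)
  have hAnn : ∀ t ω i j, 0 ≤ A t ω i j := by
    intro t ω i j; rw [hA]
    split_ifs
    · positivity
    · exact le_rfl
  have hAbd : ∀ t ω i j, |A t ω i j| ≤ (C:ℝ)⁻¹ := by
    intro t ω i j; rw [hA]
    split_ifs
    · rw [abs_of_nonneg (by positivity)]
    · simp only [abs_zero]; positivity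
  have hrow : ∀ t i ω, ∑ j, A t ω i j = 1 := by
    intro t i ω
    have h1 : ∀ j, A t ω i j = if j ∈ S t i ω then (C:ℝ)⁻¹ else 0 := hA t ω i
    simp only [h1]
    rw [Finset.sum_ite_mem, Finset.univ_inter, Finset.sum_const, hScard, nsmul_eq_mul]
    field_simp
  -- measurability of the weights
  have hWmeas : ∀ t i, Measurable[F t] (W t i) := by
    intro t
    induction t with
    | zero =>
      intro i
      have h1 : W 0 i = fun _ => (1:ℝ) := funext (hW0 i)
      rw [h1]; exact measurable_const
    | succ t ih =>
      intro i
      have h1 : W (t+1) i = fun ω => ∑ j, A t ω i j * W t j ω * g t (ξ t j ω) :=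
        funext (hWrec t i)
      rw [h1]
      refine Finset.measurable_sum _ fun j _ => ?_
      exact ((hAmeas t i j).mul ((ih j).mono (hFmono (Nat.le_succ t)) le_rfl)).mul
        ((hgmeas t).comp ((hξmeas t j).mono (hFmono (Nat.le_succ t)) le_rfl))
  -- bounds on the weights
  have hWb : ∀ t i ω, 0 < W t i ω ∧ W t i ω ≤ κg ^ t := by
    intro t
    induction t with
    | zero => intro i ω; simp [hW0]
    | succ t ih =>
      intro i ω
      constructor
      · rw [hWrec]
        refine Finset.sum_pos' (fun j _ =>
          mul_nonneg (mul_nonneg (hAnn t ω i j) (ih j ω).1.le) (hgpos t _).le) ?_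
        have hne : (S t i ω).Nonempty := by
          rw [← Finset.card_pos, hScard]; exact hC
        obtain ⟨j, hj⟩ := hne
        refine ⟨j, Finset.mem_univ j, ?_⟩
        have hAj : A t ω i j = (C:ℝ)⁻¹ := by rw [hA, if_pos hj]
        rw [hAj]
        exact mul_pos (mul_pos (by positivity) (ih j ω).1) (hgpos t _)
      · rw [hWrec, pow_succ]
        calc ∑ j, A t ω i j * W t j ω * g t (ξ t j ω)
            ≤ ∑ j, A t ω i j * κg ^ t * κg := by
              refine Finset.sum_le_sum fun j _ => ?_
              exact mul_le_mul (mul_le_mul_of_nonneg_left (ih j ω).2 (hAnn t ω i j))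
                (hgbd t _) (hgpos t _).le (mul_nonneg (hAnn t ω i j) (by positivity))
          _ = (∑ j, A t ω i j) * (κg ^ t * κg) := by simp_rw [Finset.sum_mul, mul_assoc]
          _ = κg ^ t * κg := by rw [hrow, one_mul]
  -- integrability of bounded measurable functions
  have hint : ∀ f : Ω → ℝ, Measurable f → (∃ b : ℝ, ∀ ω, |f ω| ≤ b) → Integrable f P := by
    rintro f hf ⟨b, hb⟩
    refine (integrable_const b).mono' hf.aestronglyMeasurable ?_
    exact Filter.Eventually.of_forall fun ω => by simpa [Real.norm_eq_abs] using hb ω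
  -- measurability and bound for kernel integrals
  have hKmeas : ∀ (u : ℕ) (φ : X → ℝ), Measurable φ →
      Measurable fun x => ∫ y, φ y ∂(K u x) := by
    intro u φ hφ
    haveI := hK u
    have h1 : StronglyMeasurable fun x => ∫ y, φ y ∂((K u) x) :=
      MeasureTheory.StronglyMeasurable.integral_kernel_prod_right
        (f := fun _ y => φ y) ((hφ.comp measurable_snd).stronglyMeasurable)
    exact h1.measurable
  have hKbd : ∀ (u : ℕ) (φ : X → ℝ) (b : ℝ), (∀ x, |φ x| ≤ b) →
      ∀ x, |∫ y, φ y ∂(K u x)| ≤ b := by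
    intro u φ b hb x
    haveI := hK u
    have h1 := norm_integral_le_of_norm_le_const (μ := K u x) (f := φ) (C := b)
      (Filter.Eventually.of_forall fun y => by simpa [Real.norm_eq_abs] using hb y)
    simpa [Real.norm_eq_abs, measure_univ] using h1
  intro t
  induction t with
  | zero =>
    rintro φ hφ ⟨b, hb⟩
    simp only [hW0, one_mul]
    have h1 : ∀ i : Fin N, ∫ ω, φ (ξ 0 i ω) ∂P = ∫ x, φ x ∂π₀ := by
      intro i
      rw [← hξ0law i, integral_map (hξ0meas i).aemeasurable hφ.aestronglyMeasurable]
    rw [MeasureTheory.integral_const_mul,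
      integral_finset_sum _ (fun i _ => hint (fun ω => φ (ξ 0 i ω))
        (hφ.comp (hξ0meas i)) ⟨b, fun ω => hb _⟩)]
    simp_rw [h1]
    rw [Finset.sum_const, Finset.card_univ, Fintype.card_fin, nsmul_eq_mul,
      ← mul_assoc, inv_mul_cancel₀ hNpos.ne', one_mul]
    rfl
  | succ t IH =>
    rintro φ hφ ⟨b0, hb0⟩
    haveI := hK (t+1)
    set b : ℝ := max b0 1 with hbdef
    have hb : ∀ x, |φ x| ≤ b := fun x => (hb0 x).trans (le_max_left _ _)
    have hbpos : (0:ℝ) < b := lt_of_lt_of_le one_pos (le_max_right _ _)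
    set ψ : X → ℝ := fun x => g t x * ∫ y, φ y ∂(K (t + 1) x) with hψdef
    have hψmeas : Measurable ψ := (hgmeas t).mul (hKmeas (t+1) φ hφ)
    have hψbd : ∀ x, |ψ x| ≤ κg * b := by
      intro x
      rw [hψdef, abs_mul]
      have h1 : |g t x| ≤ κg := by rw [abs_of_pos (hgpos t x)]; exact hgbd t x
      exact mul_le_mul h1 (hKbd (t+1) φ b hb x) (abs_nonneg _) hκg.le
    -- measurable (w.r.t. m0) versions of everything
    have hξm : ∀ i, Measurable (ξ (t+1) i) := fun i => (hξmeas (t+1) i).mono (hFle (t+1)) le_rfl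
    have hξtm : ∀ j, Measurable (ξ t j) := fun j => (hξmeas t j).mono (hFle t) le_rfl
    have hWtm : ∀ j, Measurable (W t j) := fun j => (hWmeas t j).mono (hFle t) le_rfl
    have hWt1m : ∀ i, Measurable (W (t+1) i) :=
      fun i => (hWmeas (t+1) i).mono (hFle (t+1)) le_rfl
    have hAm : ∀ i j, Measurable fun ω => A t ω i j :=
      fun i j => (hAmeas t i j).mono (hFle (t+1)) le_rfl
    have hhj_meas : ∀ j, Measurable fun ω => W t j ω * ψ (ξ t j ω) :=
      fun j => (hWtm j).mul (hψmeas.comp (hξtm j))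
    have hhj_bd : ∀ j ω, |W t j ω * ψ (ξ t j ω)| ≤ κg ^ t * (κg * b) := by
      intro j ω
      rw [abs_mul]
      refine mul_le_mul ?_ (hψbd _) (abs_nonneg _) (by positivity)
      rw [abs_of_pos (hWb t j ω).1]; exact (hWb t j ω).2
    have hhj_int : ∀ j, Integrable (fun ω => W t j ω * ψ (ξ t j ω)) P :=
      fun j => hint _ (hhj_meas j) ⟨_, fun ω => hhj_bd j ω⟩
    -- the σ-algebra `G = F t ⊔ σ(α_t)`
    have hGle : (F t ⊔ ⨆ k, MeasurableSpace.comap (S t k)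
        (⊤ : MeasurableSpace (Finset (Fin N)))) ≤ m0 := by
      refine sup_le (hFle t) (iSup_le fun k => ?_)
      exact (Measurable.comap_le (hSmeas t k)).trans (hFle (t+1))
    have hFtG : F t ≤ F t ⊔ ⨆ k, MeasurableSpace.comap (S t k)
        (⊤ : MeasurableSpace (Finset (Fin N))) := le_sup_left
    have hSG : ∀ k : Fin N, @Measurable Ω (Finset (Fin N))
        (F t ⊔ ⨆ k, MeasurableSpace.comap (S t k) (⊤ : MeasurableSpace (Finset (Fin N)))) ⊤
        (S t k) := by
      intro k
      refine Measurable.of_comap_le ?_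
      exact le_sup_of_le_right (le_iSup (fun k => MeasurableSpace.comap (S t k) ⊤) k)
    have hAG : ∀ i j, Measurable[F t ⊔ ⨆ k, MeasurableSpace.comap (S t k)
        (⊤ : MeasurableSpace (Finset (Fin N)))] fun ω => A t ω i j := by
      intro i j
      have he : (fun ω => A t ω i j)
          = (fun s : Finset (Fin N) => if j ∈ s then (C:ℝ)⁻¹ else 0) ∘ (S t i) :=
        funext fun ω => hA t ω i j
      rw [he]; exact measurable_from_top.comp (hSG i)
    have hWG : ∀ i, Measurable[F t ⊔ ⨆ k, MeasurableSpace.comap (S t k)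
        (⊤ : MeasurableSpace (Finset (Fin N)))] (W (t+1) i) := by
      intro i
      have h1 : W (t+1) i = fun ω => ∑ j, A t ω i j * W t j ω * g t (ξ t j ω) :=
        funext (hWrec t i)
      rw [h1]
      refine Finset.measurable_sum _ fun j _ => ?_
      exact ((hAG i j).mul ((hWmeas t j).mono hFtG le_rfl)).mul
        ((hgmeas t).comp ((hξmeas t j).mono hFtG le_rfl))
    -- probability that `j` belongs to the random subset `S t i`
    have hPmem : ∀ i j : Fin N, P {ω | j ∈ S t i ω}
        = (((N-1).choose (C-1) : ℕ) : ℝ≥0∞) * (((N.choose C : ℕ) : ℝ≥0∞))⁻¹ := by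
      intro i j
      set 𝒮 : Finset (Finset (Fin N)) := Finset.univ.filter fun s => s.card = C ∧ j ∈ s
        with h𝒮
      have hset : {ω | j ∈ S t i ω} = ⋃ s ∈ 𝒮, {ω | S t i ω = s} := by
        ext ω
        simp only [Set.mem_setOf_eq, Set.mem_iUnion, h𝒮, Finset.mem_filter,
          Finset.mem_univ, true_and]
        constructor
        · intro hj; exact ⟨S t i ω, ⟨hScard t i ω, hj⟩, rfl⟩
        · rintro ⟨s, ⟨-, hjs⟩, rfl⟩; exact hjs
      have hmeas𝒮 : ∀ s : Finset (Fin N), MeasurableSet {ω | S t i ω = s} := by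
        intro s
        have h1 : {ω | S t i ω = s} = S t i ⁻¹' {s} := rfl
        rw [h1]
        exact hFle (t+1) _ (hSmeas t i trivial)
      have hdisj : (↑𝒮 : Set (Finset (Fin N))).PairwiseDisjoint
          fun s => {ω | S t i ω = s} := by
        intro s _ s' _ hss
        simp only [Function.onFun]
        refine Set.disjoint_left.mpr fun ω h1 h2 => ?_
        exact hss (h1.symm.trans h2)
      rw [hset, measure_biUnion_finset hdisj (fun s _ => hmeas𝒮 s)]
      have hval : ∀ s ∈ 𝒮, P {ω | S t i ω = s} = (((N.choose C : ℕ) : ℝ≥0∞))⁻¹ := by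
        intro s hs
        rw [h𝒮, Finset.mem_filter] at hs
        exact hSunif t i s hs.2.1
      rw [Finset.sum_congr rfl hval, Finset.sum_const, nsmul_eq_mul]
      congr 1
      have hcard : 𝒮.card = (N-1).choose (C-1) := by
        have hbij : 𝒮.card = ((Finset.univ.erase j).powersetCard (C-1)).card := by
          refine Finset.card_bij' (fun s _ => s.erase j) (fun u _ => insert j u) ?_ ?_ ?_ ?_
          · intro s hs
            rw [h𝒮, Finset.mem_filter] at hs
            rw [Finset.mem_powersetCard]
            exact ⟨Finset.erase_subset_erase j (Finset.subset_univ s),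
              by rw [Finset.card_erase_of_mem hs.2.2, hs.2.1]⟩
          · intro u hu
            rw [Finset.mem_powersetCard] at hu
            have hju : j ∉ u := fun h => (Finset.notMem_erase j _) (hu.1 h)
            rw [h𝒮, Finset.mem_filter]
            refine ⟨Finset.mem_univ _, ?_, Finset.mem_insert_self j u⟩
            rw [Finset.card_insert_of_notMem hju, hu.2, Nat.sub_add_cancel hC]
          · intro s hs
            rw [h𝒮, Finset.mem_filter] at hs
            exact Finset.insert_erase hs.2.2
          · intro u hu
            rw [Finset.mem_powersetCard] at hu
            exact Finset.erase_insert fun h => (Finset.notMem_erase j _) (hu.1 h)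
        rw [hbij, Finset.card_powersetCard, Finset.card_erase_of_mem (Finset.mem_univ j),
          Finset.card_univ, Fintype.card_fin]
      rw [hcard]
    -- the expectation of a matrix entry is `1/N`
    have hnatid : (N:ℝ) * ((N-1).choose (C-1) : ℕ) = (N.choose C : ℕ) * (C:ℝ) := by
      have h1 : N * (N-1).choose (C-1) = N.choose C * C := by
        obtain ⟨n, rfl⟩ : ∃ n, N = n + 1 := ⟨N-1, by omega⟩
        obtain ⟨c, rfl⟩ : ∃ c, C = c + 1 := ⟨C-1, by omega⟩
        simpa using Nat.add_one_mul_choose_eq n c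
      exact_mod_cast congrArg (Nat.cast : ℕ → ℝ) h1
    have hchoosepos : (0:ℝ) < (N.choose C : ℕ) := by
      exact_mod_cast Nat.choose_pos hCN
    have hAint : ∀ i j, ∫ ω, A t ω i j ∂P = (N:ℝ)⁻¹ := by
      intro i j
      have hmE : MeasurableSet {ω | j ∈ S t i ω} := by
        have h1 : {ω | j ∈ S t i ω} = S t i ⁻¹' {s | j ∈ s} := rfl
        rw [h1]
        exact hFle (t+1) _ (hSmeas t i trivial)
      have he : (fun ω => A t ω i j)
          = Set.indicator {ω | j ∈ S t i ω} (fun _ => (C:ℝ)⁻¹) := by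
        funext ω
        rw [hA]
        by_cases h : j ∈ S t i ω <;> simp [h, Set.indicator]
      rw [he, integral_indicator_const _ hmE, measureReal_def, hPmem i j, ENNReal.toReal_mul,
        ENNReal.toReal_inv, ENNReal.toReal_natCast, ENNReal.toReal_natCast, smul_eq_mul]
      have hgoal : (((N-1).choose (C-1) : ℕ) : ℝ) * (((N.choose C : ℕ) : ℝ))⁻¹ * (C:ℝ)⁻¹
          = (N:ℝ)⁻¹ := by
        have hd : (((N.choose C : ℕ) : ℝ)) * (C:ℝ) ≠ 0 := (mul_pos hchoosepos hCpos).ne'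
        rw [mul_assoc, ← mul_inv, ← div_eq_mul_inv, div_eq_iff hd, eq_comm, inv_mul_eq_iff_eq_mul₀ hNpos.ne', eq_comm]
        linear_combination hnatid
      exact hgoal
    -- key step: the expectation of one weighted particle at time `t+1`
    have key : ∀ i, ∫ ω, W (t+1) i ω * φ (ξ (t+1) i ω) ∂P
        = ∑ j, (N:ℝ)⁻¹ * ∫ ω, W t j ω * ψ (ξ t j ω) ∂P := by
      intro i
      -- the test functions
      set φf : Fin N → X → ℝ := fun k x => if k = i then φ x / b else 1 with hφf
      have hφfm : ∀ k, Measurable (φf k) := by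
        intro k
        by_cases h : k = i
        · subst h
          simpa only [hφf, if_pos rfl, ↓reduceIte] using hφ.div_const b
        · simp only [hφf, if_neg h]
          exact measurable_const
      have hφfb : ∀ k x, |φf k x| ≤ 1 := by
        intro k x
        by_cases h : k = i
        · subst h
          simp only [hφf, if_pos rfl]
          rw [abs_div, abs_of_pos hbpos]
          exact div_le_one_of_le₀ (hb x) hbpos.le
        · simp [hφf, if_neg h]
      have hc := hcond t φf hφfm hφfb
      -- identify the function being conditioned
      have hprodL : (fun ω => ∏ k, φf k (ξ (t + 1) k ω))
          = fun ω => φ (ξ (t + 1) i ω) / b := by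
        funext ω
        simp [hφf, Finset.prod_ite_eq']
      -- compute the conditional expectation pointwise
      have hprodR : (fun ω => ∏ k, ((W (t + 1) k ω)⁻¹ *
            ∑ j, A t ω k j * W t j ω * g t (ξ t j ω) * ∫ y, φf k y ∂(K (t + 1) (ξ t j ω))))
          = fun ω => (W (t+1) i ω)⁻¹ *
            (∑ j, A t ω i j * W t j ω * g t (ξ t j ω) * ∫ y, φ y ∂(K (t + 1) (ξ t j ω))) / b := by
        funext ω
        have hone : ∀ k ∈ Finset.univ, k ≠ i → (W (t + 1) k ω)⁻¹ *
            ∑ j, A t ω k j * W t j ω * g t (ξ t j ω) * ∫ y, φf k y ∂(K (t + 1) (ξ t j ω)) = 1 := by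
          intro k _ hk
          have h1 : ∀ j : Fin N, ∫ y, φf k y ∂(K (t + 1) (ξ t j ω)) = 1 := by
            intro j
            simp [hφf, if_neg hk]
          simp_rw [h1, mul_one]
          rw [← hWrec t k ω]
          exact inv_mul_cancel₀ (hWb (t+1) k ω).1.ne'
        rw [Finset.prod_eq_single_of_mem i (Finset.mem_univ i) hone]
        have h2 : ∀ j : Fin N, ∫ y, φf i y ∂(K (t + 1) (ξ t j ω))
            = (∫ y, φ y ∂(K (t + 1) (ξ t j ω))) / b := by
          intro j
          simp only [hφf, if_pos rfl]
          exact integral_div b _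
        simp_rw [h2, ← mul_div_assoc, ← Finset.sum_div]
        rw [mul_div_assoc]
      rw [hprodL, hprodR] at hc
      -- conditional-expectation manipulation
      have hWφG : StronglyMeasurable[F t ⊔ ⨆ k, MeasurableSpace.comap (S t k)
          (⊤ : MeasurableSpace (Finset (Fin N)))] (fun ω => b * W (t+1) i ω) :=
        (measurable_const.mul (hWG i)).stronglyMeasurable
      have hh_int : Integrable (fun ω => φ (ξ (t + 1) i ω) / b) P := by
        refine hint _ ((hφ.comp (hξm i)).div_const b) ⟨1, fun ω => ?_⟩
        rw [abs_div, abs_of_pos hbpos]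
        exact div_le_one_of_le₀ (hb _) hbpos.le
      have hfh_eq : ((fun ω => b * W (t+1) i ω) * fun ω => φ (ξ (t + 1) i ω) / b)
          = fun ω => W (t+1) i ω * φ (ξ (t+1) i ω) := by
        funext ω
        simp only [Pi.mul_apply]
        field_simp
      have hfh_int : Integrable
          ((fun ω => b * W (t+1) i ω) * fun ω => φ (ξ (t + 1) i ω) / b) P := by
        rw [hfh_eq]
        refine hint _ ((hWt1m i).mul (hφ.comp (hξm i))) ⟨κg^(t+1) * b, fun ω => ?_⟩
        rw [abs_mul]
        refine mul_le_mul ?_ (hb _) (abs_nonneg _) (by positivity)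
        rw [abs_of_pos (hWb (t+1) i ω).1]; exact (hWb (t+1) i ω).2
      have hmul := condExp_mul_of_stronglyMeasurable_left hWφG hfh_int hh_int
      calc ∫ ω, W (t+1) i ω * φ (ξ (t+1) i ω) ∂P
          = ∫ ω, ((fun ω => b * W (t+1) i ω) * fun ω => φ (ξ (t + 1) i ω) / b) ω ∂P := by
            rw [hfh_eq]
        _ = ∫ ω, (P[((fun ω => b * W (t+1) i ω) * fun ω => φ (ξ (t + 1) i ω) / b) |
              F t ⊔ ⨆ k, MeasurableSpace.comap (S t k)
                (⊤ : MeasurableSpace (Finset (Fin N)))]) ω ∂P :=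
            (integral_condExp hGle).symm
        _ = ∫ ω, (∑ j, A t ω i j * (W t j ω * ψ (ξ t j ω))) ∂P := by
            refine integral_congr_ae (hmul.trans ?_)
            filter_upwards [hc] with ω hω
            simp only [Pi.mul_apply]
            rw [hω]
            have hW := (hWb (t+1) i ω).1.ne'
            have hY : b * W (t+1) i ω * ((W (t + 1) i ω)⁻¹ *
                (∑ j, A t ω i j * W t j ω * g t (ξ t j ω) *
                  ∫ y, φ y ∂(K (t + 1) (ξ t j ω))) / b)
                = ∑ j, A t ω i j * W t j ω * g t (ξ t j ω) *
                  ∫ y, φ y ∂(K (t + 1) (ξ t j ω)) := by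
              field_simp
            rw [hY]
            refine Finset.sum_congr rfl fun j _ => ?_
            rw [hψdef]
            ring
        _ = ∑ j, ∫ ω, A t ω i j * (W t j ω * ψ (ξ t j ω)) ∂P := by
            refine integral_finset_sum _ fun j _ => ?_
            refine hint (fun ω => A t ω i j * (W t j ω * ψ (ξ t j ω)))
              ((hAm i j).mul (hhj_meas j)) ⟨(C:ℝ)⁻¹ * (κg ^ t * (κg * b)), fun ω => ?_⟩
            rw [abs_mul]
            exact mul_le_mul (hAbd t ω i j) (hhj_bd j ω) (abs_nonneg _) (by positivity)
        _ = ∑ j, (N:ℝ)⁻¹ * ∫ ω, W t j ω * ψ (ξ t j ω) ∂P := by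
            refine Finset.sum_congr rfl fun j _ => ?_
            have h1 : MeasurableSpace.comap (fun ω => A t ω i j) inferInstance
                ≤ ⨆ k, MeasurableSpace.comap (S t k)
                  (⊤ : MeasurableSpace (Finset (Fin N))) := by
              have he : (fun ω => A t ω i j)
                  = (fun s : Finset (Fin N) => if j ∈ s then (C:ℝ)⁻¹ else 0) ∘ (S t i) :=
                funext fun ω => hA t ω i j
              rw [he, ← MeasurableSpace.comap_comp]
              exact le_trans (MeasurableSpace.comap_mono le_top)
                (le_iSup (fun k => MeasurableSpace.comap (S t k) ⊤) i)
            have h2 : MeasurableSpace.comap (fun ω => W t j ω * ψ (ξ t j ω)) inferInstance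
                ≤ F t :=
              Measurable.comap_le ((hWmeas t j).mul (hψmeas.comp (hξmeas t j)))
            have hindep : IndepFun (fun ω => A t ω i j)
                (fun ω => W t j ω * ψ (ξ t j ω)) P :=
              indep_of_indep_of_le_left (indep_of_indep_of_le_right (hSindep t) h2) h1
            rw [hindep.integral_fun_mul_eq_mul_integral ((hAm i j).aestronglyMeasurable)
              ((hhj_meas j).aestronglyMeasurable), hAint i j]
    have hW1φ_int : ∀ i, Integrable (fun ω => W (t+1) i ω * φ (ξ (t+1) i ω)) P := by
      intro i
      refine hint _ ((hWt1m i).mul (hφ.comp (hξm i))) ⟨κg^(t+1) * b, fun ω => ?_⟩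
      rw [abs_mul]
      refine mul_le_mul ?_ (hb _) (abs_nonneg _) (by positivity)
      rw [abs_of_pos (hWb (t+1) i ω).1]; exact (hWb (t+1) i ω).2
    calc ∫ ω, ((N:ℝ)⁻¹ * ∑ i, W (t+1) i ω * φ (ξ (t+1) i ω)) ∂P
        = (N:ℝ)⁻¹ * ∑ i, ∫ ω, W (t+1) i ω * φ (ξ (t+1) i ω) ∂P := by
          rw [MeasureTheory.integral_const_mul,
            integral_finset_sum _ fun i _ => hW1φ_int i]
      _ = (N:ℝ)⁻¹ * ∑ _i : Fin N, (∑ j, (N:ℝ)⁻¹ * ∫ ω, W t j ω * ψ (ξ t j ω) ∂P) := by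
          rw [Finset.sum_congr rfl fun i _ => key i]
      _ = ∑ j, (N:ℝ)⁻¹ * ∫ ω, W t j ω * ψ (ξ t j ω) ∂P := by
          rw [Finset.sum_const, Finset.card_univ, Fintype.card_fin, nsmul_eq_mul,
            ← mul_assoc, inv_mul_cancel₀ hNpos.ne', one_mul]
      _ = ∫ ω, ((N:ℝ)⁻¹ * ∑ j, W t j ω * ψ (ξ t j ω)) ∂P := by
          rw [MeasureTheory.integral_const_mul,
            integral_finset_sum _ fun j _ => hhj_int j, Finset.mul_sum]
      _ = ∫ x, Qiter K g t ψ x ∂π₀ := IH ψ hψmeas ⟨κg * b, hψbd⟩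
      _ = ∫ x, Qiter K g (t+1) φ x ∂π₀ := by rw [hψdef]; rfl
end
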